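/- Let A be a symmetric N×N matrix with entries in [0,1] and zero diagonal, with fixed total sum Σ_{i,j} A_{ij} = 2M. Then over all such matrices, μ N/(2M) is an upper bound for the quantity μ/Λ_max(A); i.e., the second threshold λ_{c2} = sup_A μ/Λ_max(A) satisfies λ_{c2} ≤ μN/(2M), with equality attained by the matrix Z with all off-diagonal entries equal to 2M/(N(N-1)). -/

import Mathlib

/-!
If every eigenvalue of the symmetric matrix `A` is at most `Λ`, then `Λ • 1 - A` is positive
semidefinite; testing it on the all-ones vector gives `2M = 1ᵀ A 1 ≤ Λ N`,
i.e. `Λ ≥ 2M / N > 0`.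
For `Z = c (J - I)` the all-ones vector has eigenvalue `c (N - 1)`, and any other eigenvalue is
`-c`, so `Λ_max(Z) = c (N - 1) = 2M / N`.
-/

/-- `IsMaxEigenvalue A Λ` : `Λ` is the largest (real) eigenvalue of `A`. -/
def IsMaxEigenvalue {N : ℕ} (A : Matrix (Fin N) (Fin N) ℝ) (Λ : ℝ) : Prop :=
  (∃ v : Fin N → ℝ, v ≠ 0 ∧ A.mulVec v = Λ • v) ∧
    ∀ η : ℝ, (∃ v : Fin N → ℝ, v ≠ 0 ∧ A.mulVec v = η • v) → η ≤ Λ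

open Matrix

theorem Matrix.mem_spectrum_iff_exists_mulVec_eq_smul {n K : Type*} [Fintype n] [DecidableEq n]
    [Field K] {A : Matrix n n K} {μ : K} :
    μ ∈ spectrum K A ↔ ∃ v : n → K, v ≠ 0 ∧ A *ᵥ v = μ • v := by
  rw [← spectrum_toLin', ← Module.End.hasEigenvalue_iff_mem_spectrum]
  constructor
  · intro h
    obtain ⟨v, hv⟩ := h.exists_hasEigenvector
    exact ⟨v, hv.2, by simpa using hv.apply_eq_smul⟩
  · rintro ⟨v, hv0, hv⟩
    exact Module.End.hasEigenvalue_of_hasEigenvector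
      ⟨by simpa [Module.End.mem_eigenspace_iff] using hv, hv0⟩

open scoped MatrixOrder in
theorem Matrix.IsHermitian.posSemidef_smul_one_sub {n : Type*} [Fintype n] [DecidableEq n]
    {A : Matrix n n ℝ} (hA : A.IsHermitian) {r : ℝ} (h : ∀ x ∈ spectrum ℝ A, x ≤ r) :
    (r • 1 - A).PosSemidef := by
  have := le_algebraMap_of_spectrum_le h hA
  rwa [Matrix.le_iff, Algebra.algebraMap_eq_smul_one] at this

theorem Matrix.IsHermitian.dotProduct_mulVec_le {n : Type*} [Fintype n] [DecidableEq n]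
    {A : Matrix n n ℝ} (hA : A.IsHermitian) {r : ℝ} (h : ∀ x ∈ spectrum ℝ A, x ≤ r)
    (w : n → ℝ) : w ⬝ᵥ A *ᵥ w ≤ r * (w ⬝ᵥ w) := by
  have := (hA.posSemidef_smul_one_sub h).dotProduct_mulVec_nonneg w
  simp only [star_trivial, sub_mulVec, smul_mulVec, one_mulVec, dotProduct_sub,
    dotProduct_smul, smul_eq_mul] at this
  linarith

theorem IsMaxEigenvalue.sum_sum_le_mul {N : ℕ} {A : Matrix (Fin N) (Fin N) ℝ} {Λ : ℝ}
    (hΛ : IsMaxEigenvalue A Λ) (hA : A.IsSymm) : ∑ i, ∑ j, A i j ≤ Λ * N := by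
  have h := (isHermitian_iff_isSymm.mpr hA).dotProduct_mulVec_le
    (fun x hx ↦ hΛ.2 x (mem_spectrum_iff_exists_mulVec_eq_smul.mp hx)) 1
  simpa [dotProduct, mulVec] using h

theorem IsMaxEigenvalue.unique {N : ℕ} {A : Matrix (Fin N) (Fin N) ℝ} {Λ Λ' : ℝ}
    (h : IsMaxEigenvalue A Λ) (h' : IsMaxEigenvalue A Λ') : Λ = Λ' :=
  le_antisymm (h'.2 Λ h.1) (h.2 Λ' h'.1)

section OffDiagonalConstant

/-- `c (J - I)`; the paper's `Z` is the case `c = 2M / (N (N - 1))`. -/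
def offDiagonalConst (n : Type*) {K : Type*} [DecidableEq n] [Zero K] (c : K) : Matrix n n K :=
  of fun i j ↦ if i = j then 0 else c

variable {n K : Type*} [Fintype n] [DecidableEq n]

theorem offDiagonalConst_mulVec [Ring K] (c : K) (v : n → K) :
    offDiagonalConst n c *ᵥ v = fun i ↦ c * (∑ j, v j - v i) := by
  ext i
  simp only [offDiagonalConst, mulVec, dotProduct, of_apply, ite_mul, zero_mul, Finset.sum_ite,
    Finset.sum_const_zero, zero_add, ← ne_eq, Finset.filter_ne, ← Finset.mul_sum,
    Finset.sum_erase_eq_sub (Finset.mem_univ i), mul_sub]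

theorem offDiagonalConst_mulVec_const_one [Ring K] (c : K) :
    offDiagonalConst n c *ᵥ (fun _ ↦ 1) = (c * (Fintype.card n - 1)) • fun _ ↦ 1 := by
  ext i
  simp [offDiagonalConst_mulVec]

/-- An eigenvector `v` satisfies `(η + c) v = c (∑ v) 1`: either `η = -c` or `v` is constant. -/
theorem eq_or_eq_neg_of_offDiagonalConst_mulVec [Field K] {c η : K} {v : n → K} (hv : v ≠ 0)
    (h : offDiagonalConst n c *ᵥ v = η • v) :
    η = c * (Fintype.card n - 1) ∨ η = -c := by
  have heig : ∀ i, (η + c) * v i = c * ∑ j, v j := fun i ↦ by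
    have := congrFun h i
    rw [offDiagonalConst_mulVec, Pi.smul_apply, smul_eq_mul] at this
    linear_combination -this
  rcases eq_or_ne (η + c) 0 with hη | hη
  · exact Or.inr (eq_neg_of_add_eq_zero_left hη)
  obtain ⟨i₀, hi₀⟩ := Function.ne_iff.mp hv
  have hconst : ∀ i, v i = v i₀ := fun i ↦
    mul_left_cancel₀ hη ((heig i).trans (heig i₀).symm)
  have hsum : ∑ j, v j = Fintype.card n * v i₀ := by
    simp [Finset.sum_congr rfl fun j _ ↦ hconst j]
  have hη' : (η + c) * v i₀ = (c * Fintype.card n) * v i₀ := by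
    rw [heig i₀, hsum, mul_assoc]
  left
  linear_combination mul_right_cancel₀ hi₀ hη'

end OffDiagonalConstant

theorem isMaxEigenvalue_offDiagonalConst {N : ℕ} [NeZero N] {c : ℝ} (hc : 0 ≤ c) :
    IsMaxEigenvalue (offDiagonalConst (Fin N) c) (c * (N - 1)) := by
  have hones := offDiagonalConst_mulVec_const_one (n := Fin N) c
  rw [Fintype.card_fin] at hones
  refine ⟨⟨fun _ ↦ 1, fun h ↦ one_ne_zero (congrFun h 0), hones⟩, ?_⟩
  rintro η ⟨v, hv, h⟩
  rcases eq_or_eq_neg_of_offDiagonalConst_mulVec hv h with rfl | rfl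
  · simp
  · have : (1 : ℝ) ≤ N := by exact_mod_cast NeZero.one_le
    nlinarith

theorem second_threshold_bound_general (N : ℕ) (M μ : ℝ) (hM : 0 < M)
    (hMle : 2 * M ≤ N * (N - 1)) (hμ : 0 < μ) :
    (∀ A : Matrix (Fin N) (Fin N) ℝ, A.IsSymm → (∀ i j, 0 ≤ A i j ∧ A i j ≤ 1) →
      (∀ i, A i i = 0) → (∑ i, ∑ j, A i j = 2 * M) →
      ∀ Λ : ℝ, IsMaxEigenvalue A Λ → μ / Λ ≤ μ * N / (2 * M)) ∧
    (∀ Λ : ℝ,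
      IsMaxEigenvalue
        (Matrix.of fun i j : Fin N => if i = j then 0 else 2 * M / (N * (N - 1))) Λ →
      μ / Λ = μ * N / (2 * M)) := by
  have hN : (1 : ℝ) < N := by
    by_contra! h
    nlinarith [N.cast_nonneg (α := ℝ)]
  have : NeZero N := ⟨by rintro rfl; norm_num at hN⟩
  constructor
  · intro A hA _ _ hsum Λ hΛ
    have hΛN := hΛ.sum_sum_le_mul hA
    rw [hsum] at hΛN
    have hΛpos : 0 < Λ := by nlinarith
    rw [div_le_div_iff₀ hΛpos (by positivity)]
    nlinarith
  · intro Λ hΛ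
    have hc : 0 ≤ 2 * M / (N * (N - 1)) := by positivity
    have hN₁ : (N : ℝ) - 1 ≠ 0 := sub_ne_zero.mpr hN.ne'
    rw [hΛ.unique (isMaxEigenvalue_offDiagonalConst hc)]
    field_simp

/-- Over all symmetric matrices with entries in `[0,1]`, zero diagonal and total entry
sum `2M`, the threshold `μ/Λ_max(A)` is bounded above by `μN/(2M)`, and this bound is
attained by the matrix `Z` with all off-diagonal entries equal to `2M/(N(N-1))`. -/
theorem second_threshold_bound (N : ℕ) (hN : 0 < N) (M μ : ℝ) (hM : 0 < M)
    (hMle : 2 * M ≤ N * (N - 1)) (hμ : 0 < μ) :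
    (∀ A : Matrix (Fin N) (Fin N) ℝ, A.IsSymm → (∀ i j, 0 ≤ A i j ∧ A i j ≤ 1) →
      (∀ i, A i i = 0) → (∑ i, ∑ j, A i j = 2 * M) →
      ∀ Λ : ℝ, IsMaxEigenvalue A Λ → μ / Λ ≤ μ * N / (2 * M)) ∧
    (∀ Λ : ℝ,
      IsMaxEigenvalue
        (Matrix.of fun i j : Fin N => if i = j then 0 else 2 * M / (N * (N - 1))) Λ →
      μ / Λ = μ * N / (2 * M)) :=
  second_threshold_bound_general N M μ hM hMle hμ
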